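/- Let F be a finite non-abelian AC-group such that all non-central conjugacy classes of F have the same size, with |F/Z(F)| = q^{κ-ω} and |C_F(f)/Z(F)| = q^{ν-ω} for every non-central f, where q is a prime. Then ω(F) = (q^{κ-ω} - 1)/(q^{ν-ω} - 1), (ν - ω) divides (κ - ω), and ν - ω ≤ ω where |Z(F)| has q-part q^ω; in particular ν ≤ 2ω and κ ≤ 3ω when Z(F) is a q-group of order q^ω. -/

import Mathlib

/-!
In an AC-group, two noncentral elements commute iff they have the same centralizer. Hence the
sets `C(x) \ Z` partition `F \ Z` into `ω(F)` blocks of size `q^ν - q^ω`, and a largest pairwise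
noncommuting set is a transversal of these blocks; this gives `ω(F) (q^ν - q^ω) = q^κ - q^ω`, and
`ν - ω ∣ κ - ω` follows from `gcd (q^a - 1) (q^b - 1) = q^(gcd a b) - 1`. The noncentral conjugacy
classes, all of size `q^(κ-ν)`, also partition `F \ Z`, whose order `q^ω (q^(κ-ω) - 1)` has
`q`-part `q^ω`; so `κ - ν ≤ ω`. Finally `ν - ω` is a proper divisor of `κ - ω`, so
`ν - ω ≤ κ - ν ≤ ω`.
-/

open Subgroup

theorem Nat.dvd_of_pow_sub_one_dvd_pow_sub_one {q a b : ℕ} (hq : 1 < q)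
    (h : q ^ a - 1 ∣ q ^ b - 1) : a ∣ b := by
  have hgcd : q ^ Nat.gcd a b - 1 = q ^ a - 1 := by
    rw [← Nat.pow_sub_one_gcd_pow_sub_one, Nat.gcd_eq_left h]
  have := Nat.pow_right_injective hq (Nat.sub_one_cancel (Nat.one_le_pow _ _ (by omega))
    (Nat.one_le_pow _ _ (by omega)) hgcd)
  exact this ▸ Nat.gcd_dvd_right a b

theorem Nat.le_of_pow_dvd_pow_sub_pow {q a b c : ℕ} (hq : 1 < q) (hcb : c < b)
    (h : q ^ a ∣ q ^ b - q ^ c) : a ≤ c := by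
  by_contra! hca
  have hdvd : q ^ (c + 1) ∣ q ^ b - q ^ c := (Nat.pow_dvd_pow q hca).trans h
  have hc : q ^ (c + 1) ∣ q ^ c := by
    have := Nat.dvd_sub (Nat.pow_dvd_pow q hcb) hdvd
    rwa [Nat.sub_sub_self (Nat.pow_le_pow_right (by omega) hcb.le)] at this
  exact (Nat.le_of_dvd (by positivity) hc).not_gt (Nat.pow_lt_pow_right hq c.lt_succ_self)

theorem Nat.pow_sub_pow_eq_mul (q : ℕ) {c m : ℕ} (hcm : c ≤ m) :
    q ^ m - q ^ c = q ^ c * (q ^ (m - c) - 1) := by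
  rw [Nat.mul_sub, mul_one, ← pow_add, Nat.add_sub_cancel' hcm]

theorem ConjClasses.nat_card_carrier_mul_nat_card_centralizer {G : Type*} [Group G] (g : G) :
    Nat.card (ConjClasses.mk g).carrier * Nat.card (centralizer {g}) = Nat.card G := by
  rw [← ConjAct.orbit_eq_carrier_conjClasses, nat_card_centralizer_nat_card_stabilizer,
    Nat.card_coe_set_eq, ← MulAction.index_stabilizer, mul_comm, card_mul_index]
  exact Nat.card_congr ConjAct.toConjAct.toEquiv.symm

theorem Group.dvd_nat_card_sub_nat_card_center {G : Type*} [Group G] [Finite G] {d : ℕ}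
    (hd : ∀ g ∉ center G, d ∣ Nat.card (ConjClasses.mk g).carrier) :
    d ∣ Nat.card G - Nat.card (center G) := by
  rw [← Group.nat_card_center_add_sum_card_noncenter_eq_card, Nat.add_sub_cancel_left]
  refine finsum_mem_induction _ (dvd_zero d) (fun _ _ => dvd_add) ?_
  rintro x hx
  obtain ⟨g, rfl⟩ := ConjClasses.exists_rep x
  exact hd g fun hg => (ConjClasses.mk_bijOn G).mapsTo hg hx

theorem Subgroup.nat_card_lt_nat_card_of_lt {G : Type*} [Group G] [Finite G] {H K : Subgroup G}
    (h : H < K) : Nat.card H < Nat.card K := by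
  have := Set.ncard_lt_ncard (SetLike.coe_ssubset_coe.mpr h)
  rwa [← Nat.card_coe_set_eq, ← Nat.card_coe_set_eq] at this

def IsACGroup (G : Type*) [Group G] : Prop :=
  ∀ x : G, x ∉ center G → ∀ a ∈ centralizer {x}, ∀ b ∈ centralizer {x}, a * b = b * a

def noncentralCentralizers (G : Type*) [Group G] : Set (Subgroup G) :=
  (fun x => centralizer {x}) '' (center G : Set G)ᶜ

theorem card_le_ncard_noncentralCentralizers {G : Type*} [Group G] [Finite G] {g : G}
    (hg : g ∉ center G) {S : Finset G} (hS : ∀ x ∈ S, ∀ y ∈ S, x ≠ y → ¬ Commute x y) :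
    S.card ≤ (noncentralCentralizers G).ncard := by
  have hfin : (noncentralCentralizers G).Finite := (Set.toFinite _).image _
  rcases le_or_gt S.card 1 with hS1 | hS1
  · exact hS1.trans ((Set.ncard_pos hfin).mpr ⟨_, Set.mem_image_of_mem _ hg⟩)
  have hSZ : ∀ x ∈ S, x ∉ center G := fun x hx hxZ => by
    obtain ⟨y, hy, hyx⟩ := Finset.exists_mem_ne hS1 x
    exact hS y hy x hx hyx (mem_center_iff.mp hxZ y)
  rw [← Set.ncard_coe_finset]
  refine Set.ncard_le_ncard_of_injOn _ (fun x hx => Set.mem_image_of_mem _ (hSZ x hx)) ?_ hfin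
  intro x hx y hy (hxy : centralizer {x} = centralizer {y})
  by_contra hne
  refine hS x hx y hy hne (mem_centralizer_singleton_iff.mp ?_).symm
  exact hxy ▸ mem_centralizer_singleton_iff.mpr rfl

namespace IsACGroup

variable {G : Type*} [Group G]

theorem centralizer_eq_of_commute (hG : IsACGroup G) {x y : G} (hx : x ∉ center G)
    (hy : y ∉ center G) (hxy : Commute x y) : centralizer {x} = centralizer {y} := by
  have hyx : y ∈ centralizer {x} := mem_centralizer_singleton_iff.mpr hxy.eq.symm
  have hxy' : x ∈ centralizer {y} := mem_centralizer_singleton_iff.mpr hxy.eq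
  apply le_antisymm <;> intro a ha <;> rw [mem_centralizer_singleton_iff]
  · exact hG x hx a ha y hyx
  · exact hG y hy a ha x hxy'

theorem centralizer_eq_centralizer_iff (hG : IsACGroup G) {x y : G} (hx : x ∉ center G)
    (hy : y ∉ center G) : centralizer {x} = centralizer {y} ↔ Commute x y := by
  refine ⟨fun h => ?_, hG.centralizer_eq_of_commute hx hy⟩
  have : y ∈ centralizer {x} := h ▸ mem_centralizer_singleton_iff.mpr rfl
  exact (mem_centralizer_singleton_iff.mp this).symm

theorem fiber_centralizer_eq_centralizer_sdiff_center (hG : IsACGroup G) {x : G}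
    (hx : x ∉ center G) :
    {y ∈ (center G : Set G)ᶜ | centralizer {y} = centralizer {x}} =
      (centralizer {x} : Set G) \ center G := by
  ext y
  simp only [Set.mem_ofPred_eq, Set.mem_compl_iff, Set.mem_sdiff, SetLike.mem_coe]
  refine and_comm.trans (and_congr_left fun hy => ?_)
  rw [hG.centralizer_eq_centralizer_iff hy hx, mem_centralizer_singleton_iff]
  rfl

theorem nat_card_sub_nat_card_center_eq (hG : IsACGroup G) [Finite G] {c : ℕ}
    (hc : ∀ x ∉ center G, Nat.card (centralizer {x}) = c) :
    Nat.card G - Nat.card (center G) =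
      (noncentralCentralizers G).ncard * (c - Nat.card (center G)) := by
  classical
  have := Fintype.ofFinite G
  set N := ((center G : Set G)ᶜ).toFinset
  have hfiber : ∀ C ∈ N.image (fun x => centralizer {x}),
      (N.filter (fun y => centralizer {y} = C)).card = c - Nat.card (center G) := by
    intro C hC
    obtain ⟨x, hx, rfl⟩ := Finset.mem_image.mp hC
    rw [Set.mem_toFinset] at hx
    rw [← Set.ncard_coe_finset, Finset.coe_filter]
    simp only [N, Set.mem_toFinset]
    rw [hG.fiber_centralizer_eq_centralizer_sdiff_center hx,
      Set.ncard_sdiff (center_le_centralizer _), ← Nat.card_coe_set_eq, ← Nat.card_coe_set_eq,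
      ← hc x hx]
    rfl
  have hN : Nat.card G - Nat.card (center G) = N.card := by
    rw [← Set.ncard_eq_toFinset_card', Set.ncard_compl, ← Nat.card_coe_set_eq]
    rfl
  have himage : (noncentralCentralizers G).ncard = (N.image (fun x => centralizer {x})).card := by
    rw [← Set.ncard_coe_finset, Finset.coe_image, Set.coe_toFinset]
    rfl
  rw [hN, himage, Finset.card_eq_sum_card_image (fun x => centralizer {x}) N,
    Finset.sum_congr rfl hfiber, Finset.sum_const, smul_eq_mul]

theorem isGreatest_card_pairwise_noncommuting (hG : IsACGroup G) [Finite G] {g : G}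
    (hg : g ∉ center G) :
    IsGreatest {n : ℕ | ∃ S : Finset G, S.card = n ∧ ∀ x ∈ S, ∀ y ∈ S, x ≠ y → ¬ Commute x y}
      (noncentralCentralizers G).ncard := by
  refine ⟨?_, fun n ⟨S, hSn, hS⟩ => hSn ▸ card_le_ncard_noncentralCentralizers hg hS⟩
  obtain ⟨s, hsZ, hbij⟩ := Set.exists_subset_bijOn (center G : Set G)ᶜ fun x => centralizer {x}
  have hs : s.Finite := Set.toFinite s
  refine ⟨hs.toFinset, ?_, fun x hx y hy hne hxy => hne ?_⟩
  · rw [← Set.ncard_eq_toFinset_card s hs, ← hbij.injOn.ncard_image, hbij.image_eq]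
    rfl
  · rw [Set.Finite.mem_toFinset] at hx hy
    exact hbij.injOn hx hy (hG.centralizer_eq_of_commute (hsZ hx) (hsZ hy) hxy)

end IsACGroup

theorem stmt18_general (q : ℕ) (hq : q.Prime) (F : Type*) [Group F] [Finite F]
    (hna : ¬ ∀ a b : F, a * b = b * a)
    (hAC : ∀ x : F, x ∉ center F → ∀ a ∈ centralizer {x}, ∀ b ∈ centralizer {x}, a * b = b * a)
    (κ ν ω : ℕ)
    (hF : Nat.card F = q ^ κ)
    (hZ : Nat.card (center F) = q ^ ω)
    (hC : ∀ f : F, f ∉ center F → Nat.card (centralizer {f} : Subgroup F) = q ^ ν) :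
    (∃ w : ℕ,
        IsGreatest {n : ℕ | ∃ S : Finset F, S.card = n ∧
            ∀ x ∈ S, ∀ y ∈ S, x ≠ y → ¬ Commute x y} w ∧
        w * (q ^ (ν - ω) - 1) = q ^ (κ - ω) - 1) ∧
    (ν - ω) ∣ (κ - ω) ∧ ν - ω ≤ ω ∧ ν ≤ 2 * ω ∧ κ ≤ 3 * ω := by
  have hq1 := hq.one_lt
  have hAC : IsACGroup F := hAC
  push Not at hna
  obtain ⟨a, b, hab⟩ := hna
  have ha : a ∉ center F := fun h => hab (mem_center_iff.mp h b).symm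
  have hων : ω < ν := by
    have h := nat_card_lt_nat_card_of_lt (SetLike.lt_iff_le_and_exists.mpr
      ⟨center_le_centralizer {a}, a, mem_centralizer_singleton_iff.mpr rfl, ha⟩)
    rwa [hZ, hC a ha, Nat.pow_lt_pow_iff_right hq1] at h
  have hνκ : ν < κ := by
    have hb : b ∉ centralizer {a} := fun h => hab (mem_centralizer_singleton_iff.mp h).symm
    have h := nat_card_lt_nat_card_of_lt
      (lt_top_iff_ne_top.mpr fun h => hb (h ▸ mem_top b) : centralizer {a} < ⊤)
    rwa [hC a ha, card_top, hF, Nat.pow_lt_pow_iff_right hq1] at h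
  have hclass : ∀ g ∉ center F, Nat.card (ConjClasses.mk g).carrier = q ^ (κ - ν) := by
    intro g hg
    refine Nat.eq_of_mul_eq_mul_right (pow_pos hq.pos ν) ?_
    rw [← pow_add, Nat.sub_add_cancel hνκ.le, ← hF,
      ← ConjClasses.nat_card_carrier_mul_nat_card_centralizer g, hC g hg]
  have hw : (noncentralCentralizers F).ncard * (q ^ (ν - ω) - 1) = q ^ (κ - ω) - 1 := by
    have h := hAC.nat_card_sub_nat_card_center_eq hC
    rw [hF, hZ, Nat.pow_sub_pow_eq_mul q (hων.trans hνκ).le, Nat.pow_sub_pow_eq_mul q hων.le,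
      mul_left_comm] at h
    exact (Nat.eq_of_mul_eq_mul_left (pow_pos hq.pos ω) h).symm
  have hdvd : ν - ω ∣ κ - ω := Nat.dvd_of_pow_sub_one_dvd_pow_sub_one hq1 (Dvd.intro_left _ hw)
  have hκν : κ - ν ≤ ω := Nat.le_of_pow_dvd_pow_sub_pow hq1 (hων.trans hνκ)
    (hF ▸ hZ ▸ Group.dvd_nat_card_sub_nat_card_center fun g hg => (hclass g hg).symm.dvd)
  have hνω : ν - ω ≤ κ - ν := by
    refine Nat.le_of_dvd (by omega) ?_
    simpa [show κ - ω - (ν - ω) = κ - ν by omega] using Nat.dvd_sub hdvd dvd_rfl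
  exact ⟨⟨_, hAC.isGreatest_card_pairwise_noncommuting ha, hw⟩, hdvd, by omega, by omega, by omega⟩

theorem stmt18 (q : ℕ) (hq : q.Prime) (F : Type*) [Group F] [Finite F]
    (hna : ¬ ∀ a b : F, a * b = b * a)
    (hAC : ∀ x : F, x ∉ center F → ∀ a ∈ centralizer {x}, ∀ b ∈ centralizer {x}, a * b = b * a)
    (κ ν ω : ℕ) (hων : ω ≤ ν) (hνκ : ν ≤ κ)
    (hF : Nat.card F = q ^ κ)
    (hZ : Nat.card (center F) = q ^ ω)
    (hC : ∀ f : F, f ∉ center F → Nat.card (centralizer {f} : Subgroup F) = q ^ ν) :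
    (∃ w : ℕ,
        IsGreatest {n : ℕ | ∃ S : Finset F, S.card = n ∧
            ∀ x ∈ S, ∀ y ∈ S, x ≠ y → ¬ Commute x y} w ∧
        w * (q ^ (ν - ω) - 1) = q ^ (κ - ω) - 1) ∧
    (ν - ω) ∣ (κ - ω) ∧ ν - ω ≤ ω ∧ ν ≤ 2 * ω ∧ κ ≤ 3 * ω :=
  stmt18_general q hq F hna hAC κ ν ω hF hZ hC
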